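/- arXiv:2602.12637 — 3 statements merged into one kernel-verified Lean document; each statement's English description precedes it below -/
import Mathlib

section
/- Let 1 ≤ m and 2m ≤ n. Let h = gl_m(ℂ) ⊕ gl_{n−m}(ℂ) be embedded block-diagonally in gl_n(ℂ), and let h^⊥ be the orthogonal complement of h in gl_n(ℂ) with respect to the trace form (so h^⊥ is the space of block off-diagonal matrices). Then the minimum over X ∈ h^⊥ of dim{Y ∈ h : [Y,X] = 0} equals (n−2m)² + m; in particular there exists X ∈ h^⊥ whose centralizer in h has dimension exactly (n−2m)² + m. -/
/-! Common definitions: `gl n` = n×n complex matrices with commutator bracket;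
sl₂-triples; Jordan type of a nilpotent matrix; centralizers; sphericality. -/

open Matrix

/-- The general linear Lie algebra `gl_n(ℂ)`: n×n complex matrices, with bracket
`⁅X, Y⁆ = X * Y - Y * X` (coming from the associative ring structure). -/
abbrev gl (n : ℕ) : Type := Matrix (Fin n) (Fin n) ℂ

/-- An sl₂-triple `(h, e, f)` in a complex Lie algebra: `⁅h,e⁆ = 2e`, `⁅h,f⁆ = −2f`,
`⁅e,f⁆ = h`. -/
def Sl2Triple {L : Type*} [LieRing L] [LieAlgebra ℂ L] (h e f : L) : Prop :=
  ⁅h, e⁆ = (2 : ℂ) • e ∧ ⁅h, f⁆ = (-2 : ℂ) • f ∧ ⁅e, f⁆ = h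

/-- A matrix `e` has Jordan type `lam` if `dim ker (e^j) = Σᵢ min (lamᵢ, j)` for all `j ≥ 1`. -/
def HasJordanType {I : Type*} [Fintype I] [DecidableEq I] {m : ℕ}
    (e : Matrix I I ℂ) (lam : Nat.Partition m) : Prop :=
  ∀ j : ℕ, 1 ≤ j →
    Module.finrank ℂ (LinearMap.ker (e ^ j).mulVecLin) =
      (lam.parts.map fun p => min p j).sum

/-- The centralizer of a subset `s` of a complex Lie algebra, as a Lie subalgebra:
`{x | ⁅y, x⁆ = 0 for all y ∈ s}`. -/
def lieCentralizer {L : Type*} [LieRing L] [LieAlgebra ℂ L] (s : Set L) :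
    LieSubalgebra ℂ L where
  carrier := {x | ∀ y ∈ s, ⁅y, x⁆ = 0}
  zero_mem' := by intro y _; exact lie_zero y
  add_mem' := by
    intro a b ha hb y hy
    rw [lie_add, ha y hy, hb y hy, add_zero]
  smul_mem' := by
    intro c a ha y hy
    rw [lie_smul, ha y hy, smul_zero]
  lie_mem' := by
    intro a b ha hb y hy
    rw [leibniz_lie, ha y hy, hb y hy, zero_lie, lie_zero, add_zero]

/-- A Lie subalgebra `k` of `l` is spherical in `l` if there is a solvable Lie subalgebra
`b` of `l` with `b + k = l` (sum of underlying subspaces). -/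
def IsSphericalIn {L : Type*} [LieRing L] [LieAlgebra ℂ L]
    (k l : LieSubalgebra ℂ L) : Prop :=
  ∃ b : LieSubalgebra ℂ L, b ≤ l ∧ LieAlgebra.IsSolvable b ∧
    b.toSubmodule ⊔ k.toSubmodule = l.toSubmodule

/-- The eigenspace of `ad h` with eigenvalue `μ`, i.e. `{x | ⁅h, x⁆ = μ • x}`. -/
def adEigenspace {L : Type*} [LieRing L] [LieAlgebra ℂ L] (h : L) (μ : ℂ) :
    Submodule ℂ L where
  carrier := {x | ⁅h, x⁆ = μ • x}
  zero_mem' := by simp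
  add_mem' := by
    intro a b ha hb
    simp only [Set.mem_setOf_eq] at *
    rw [lie_add, ha, hb, smul_add]
  smul_mem' := by
    intro c x hx
    simp only [Set.mem_setOf_eq] at *
    rw [lie_smul, hx, smul_comm]

/-- The block-diagonal subalgebra `gl_m(ℂ) ⊕ gl_k(ℂ)` of `gl_{m+k}(ℂ)` (as a subspace):
matrices whose two off-diagonal blocks vanish. -/
noncomputable def diagPair (m k : ℕ) :
    Submodule ℂ (Matrix (Fin m ⊕ Fin k) (Fin m ⊕ Fin k) ℂ) where
  carrier := {X | (∀ i j, X (Sum.inl i) (Sum.inr j) = 0) ∧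
    ∀ i j, X (Sum.inr i) (Sum.inl j) = 0}
  zero_mem' := by constructor <;> intro i j <;> simp
  add_mem' := by
    rintro a b ⟨ha1, ha2⟩ ⟨hb1, hb2⟩
    constructor <;> intro i j <;> simp [Matrix.add_apply, ha1, ha2, hb1, hb2]
  smul_mem' := by
    rintro c a ⟨ha1, ha2⟩
    constructor <;> intro i j <;> simp [Matrix.smul_apply, ha1, ha2]

/-- The orthogonal complement of a subset of `gl_n(ℂ)` with respect to the trace form
`⟨X,Y⟩ = tr(XY)`. -/
def perpOf {I : Type*} [Fintype I] [DecidableEq I] (s : Set (Matrix I I ℂ)) :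
    Set (Matrix I I ℂ) :=
  {X | ∀ Y ∈ s, Matrix.trace (X * Y) = 0}

/-- The centralizer `{Y ∈ h | ⁅Y, X⁆ = 0}` of `X` inside a subspace `h` of `gl_n(ℂ)`. -/
noncomputable def centIn {I : Type*} [Fintype I] [DecidableEq I]
    (h : Submodule ℂ (Matrix I I ℂ)) (X : Matrix I I ℂ) :
    Submodule ℂ (Matrix I I ℂ) where
  carrier := {Y | Y ∈ h ∧ ⁅Y, X⁆ = 0}
  zero_mem' := ⟨h.zero_mem, by rw [Ring.lie_def, zero_mul, mul_zero, sub_self]⟩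
  add_mem' := by
    rintro a b ⟨ha1, ha2⟩ ⟨hb1, hb2⟩
    exact ⟨h.add_mem ha1 hb1, by
      rw [Ring.lie_def] at ha2 hb2 ⊢
      rw [add_mul, mul_add, sub_eq_zero.mp ha2, sub_eq_zero.mp hb2, sub_self]⟩
  smul_mem' := by
    rintro c a ⟨ha1, ha2⟩
    exact ⟨h.smul_mem c ha1, by
      rw [Ring.lie_def] at ha2 ⊢
      rw [smul_mul_assoc, mul_smul_comm, sub_eq_zero.mp ha2, sub_self]⟩

/-!
Write `X ∈ h^⊥` as `fromBlocks 0 B C 0`; its centralizer in `h` is `ker (diagBracket B C)`,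
the pairs `(P, Q)` with `P B = B Q` and `Q C = C P`.

Lower bound. The commutant of an endomorphism `N` of an `n`-dimensional space has dimension at
least `ℓ² + (n - ℓ)`, `ℓ = dim ker N` (restrict `N` to its range and induct). Since `rank X ≤ 2m`,
the centralizer of `X` in all of `gl_n` has dimension at least `(n - 2m)² + 2m`. It is the sum of
its parts in `h` and in `h^⊥`; as `ad X` swaps `h` and `h^⊥` and is skew for the trace form, the
part in `h` exceeds the part in `h^⊥` by at least `dim h - dim h^⊥ = (n - 2m)²`. Hence twice the
dimension of the part in `h` is at least `2 ((n - 2m)² + m)`.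

Upper bound. For `B = [1 | 0]` and `C = [D; 0]` with `D` diagonal with distinct nonzero entries,
`P` commutes with `D`, hence is diagonal, and `Q = diag(P, Q₂₂)`.
-/

open Module LinearMap

namespace Subalgebra

lemma mem_centralizer_singleton_iff {K A : Type*} [CommSemiring K] [Semiring A] [Algebra K A]
    {a b : A} : b ∈ centralizer K {a} ↔ a * b = b * a := by
  simp [mem_centralizer_iff]

lemma centralizer_singleton_sub_smul_one {K A : Type*} [CommRing K] [Ring A] [Algebra K A]
    (a : A) (c : K) : centralizer K {a - c • 1} = centralizer K {a} := by
  ext b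
  simp only [mem_centralizer_singleton_iff, sub_mul, mul_sub, smul_mul_assoc, mul_smul_comm,
    one_mul, mul_one, sub_left_inj]

lemma finrank_centralizer_singleton_congr {K A B : Type*} [Field K] [Semiring A] [Semiring B]
    [Algebra K A] [Algebra K B] (e : A ≃ₐ[K] B) (a : A) :
    finrank K (centralizer K {e a}) = finrank K (centralizer K {a}) := by
  refine (LinearEquiv.ofSubmodules e.toLinearEquiv (centralizer K {a}).toSubmodule
    (centralizer K {e a}).toSubmodule ?_).finrank_eq.symm
  ext b
  simp only [Submodule.mem_map, mem_toSubmodule, mem_centralizer_iff,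
    Set.mem_singleton_iff, forall_eq]
  constructor
  · rintro ⟨c, hc, rfl⟩
    simpa using congr(e $hc)
  · intro hb
    exact ⟨e.symm b, e.injective (by simpa using hb), by simp⟩

end Subalgebra

namespace Module.End

variable {K V : Type*} [Field K] [AddCommGroup V] [Module K V]

lemma mapsTo_range_of_mem_centralizer {N M : End K V}
    (hM : M ∈ Subalgebra.centralizer K {N}) : ∀ x ∈ range N, M x ∈ range N := by
  rintro _ ⟨y, rfl⟩
  exact ⟨M y, congr($(Subalgebra.mem_centralizer_singleton_iff.1 hM) y)⟩

noncomputable def restrictRange (N : End K V) : End K (range N) :=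
  N.restrict fun x _ => mem_range_self N x

noncomputable def centralizerRestrictRange (N : End K V) :
    Subalgebra.centralizer K {N} →ₗ[K] End K (range N) where
  toFun M := M.1.restrict (mapsTo_range_of_mem_centralizer M.2)
  map_add' _ _ := rfl
  map_smul' _ _ := rfl

@[simp]
lemma centralizerRestrictRange_apply_coe (N : End K V) (M : Subalgebra.centralizer K {N})
    (x : range N) : (centralizerRestrictRange N M x : V) = M.1 x := rfl

/-- Such maps commute with `N` because both of their composites with `N` vanish. -/
noncomputable def homQuotRangeToKer (N : End K V) :
    ((V ⧸ range N) →ₗ[K] ker N) →ₗ[K] ker (centralizerRestrictRange N) where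
  toFun f := ⟨⟨(ker N).subtype ∘ₗ f ∘ₗ (range N).mkQ, by
      rw [Subalgebra.mem_centralizer_singleton_iff]
      ext x
      have hf : (range N).mkQ (N x) = 0 :=
        (Submodule.Quotient.mk_eq_zero _).2 (mem_range_self N x)
      simp [hf]⟩, by
      refine LinearMap.ext fun x => Subtype.ext ?_
      simp [(Submodule.Quotient.mk_eq_zero _).2 x.2]⟩
  map_add' _ _ := rfl
  map_smul' _ _ := rfl

lemma homQuotRangeToKer_injective (N : End K V) : Function.Injective (homQuotRangeToKer N) := by
  intro f g hfg
  ext x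
  exact congr($(hfg).1.1 x)

lemma sq_finrank_ker_le_finrank_ker_centralizerRestrictRange [FiniteDimensional K V]
    (N : End K V) : finrank K (ker N) ^ 2 ≤ finrank K (ker (centralizerRestrictRange N)) := by
  have hquot : finrank K (V ⧸ range N) = finrank K (ker N) := by
    have := (range N).finrank_quotient_add_finrank
    have := finrank_range_add_finrank_ker N
    omega
  calc finrank K (ker N) ^ 2 = finrank K ((V ⧸ range N) →ₗ[K] ker N) := by
        rw [finrank_linearMap, hquot, sq]
    _ ≤ _ := finrank_le_finrank_of_injective (homQuotRangeToKer_injective N)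

/-- Extend `M₁` from `range N` by `M₁ ∘ π` on a complement-projection `π`, corrected by
`σ ∘ M₁ ∘ (N - N ∘ π)` with `σ` a section of `N : V → range N`. -/
lemma exists_centralizerRestrictRange_eq {N : End K V} {M₁ : End K (range N)}
    (hM₁ : M₁ ∈ Subalgebra.centralizer K {restrictRange N}) :
    ∃ M, centralizerRestrictRange N M = M₁ := by
  obtain ⟨Q, hQ⟩ := (range N).exists_isCompl
  set π := (range N).projectionOnto Q hQ
  obtain ⟨σ, hσ⟩ := N.rangeRestrict.exists_rightInverse_of_surjective N.range_rangeRestrict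
  have hπ (u : range N) : π u = u := Submodule.projectionOnto_apply_left hQ u
  have hNσ (u : range N) : N (σ u) = u := congr(($hσ u : V))
  have hcomm (u : range N) : restrictRange N (M₁ u) = M₁ (restrictRange N u) :=
    congr($(Subalgebra.mem_centralizer_singleton_iff.1 hM₁) u)
  have hπN (x : V) : π (N x) = N.rangeRestrict x := hπ (N.rangeRestrict x)
  set D := N.rangeRestrict - restrictRange N ∘ₗ π
  have hDN (x : V) : D (N x) = 0 := by
    simp only [D, LinearMap.sub_apply, LinearMap.comp_apply, hπN, sub_eq_zero]
    rfl
  set M : End K V := (range N).subtype ∘ₗ M₁ ∘ₗ π + σ ∘ₗ M₁ ∘ₗ D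
  have hD (x : V) : restrictRange N (π x) + D x = N.rangeRestrict x := by
    simp [D]
  have hM : M ∈ Subalgebra.centralizer K {N} := by
    rw [Subalgebra.mem_centralizer_singleton_iff]
    ext x
    change N (M x) = M (N x)
    have hNM : N (M x) = M₁ (N.rangeRestrict x) := by
      simp only [M, LinearMap.add_apply, LinearMap.comp_apply, Submodule.coe_subtype, map_add,
        hNσ]
      rw [← hD x, map_add, Submodule.coe_add, ← hcomm]
      rfl
    have hMN : M (N x) = M₁ (N.rangeRestrict x) := by
      simp [M, hDN, hπN]
    rw [hNM, hMN]
  refine ⟨⟨M, hM⟩, LinearMap.ext fun u => Subtype.ext ?_⟩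
  have hDu : D u = 0 := by
    simp only [D, LinearMap.sub_apply, LinearMap.comp_apply, hπ, sub_eq_zero]
    rfl
  simp [M, hπ, hDu]

lemma sq_finrank_ker_add_finrank_centralizer_restrictRange_le [FiniteDimensional K V]
    (N : End K V) :
    finrank K (ker N) ^ 2 + finrank K (Subalgebra.centralizer K {restrictRange N}) ≤
      finrank K (Subalgebra.centralizer K {N}) := by
  have hle : finrank K (Subalgebra.centralizer K {restrictRange N}) ≤
      finrank K (range (centralizerRestrictRange N)) := by
    rw [← Subalgebra.finrank_toSubmodule]
    exact Submodule.finrank_mono fun _ hM₁ => exists_centralizerRestrictRange_eq hM₁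
  have := finrank_range_add_finrank_ker (centralizerRestrictRange N)
  have := sq_finrank_ker_le_finrank_ker_centralizerRestrictRange N
  omega

/-- Induction on `dim V` through `N|_{range N}`; an injective `N` is first shifted by an
eigenvalue. -/
theorem sq_finrank_ker_add_finrank_range_le_finrank_centralizer [IsAlgClosed K]
    [FiniteDimensional K V] (N : End K V) :
    finrank K (ker N) ^ 2 + finrank K (range N) ≤ finrank K (Subalgebra.centralizer K {N}) := by
  induction hd : finrank K V using Nat.strong_induction_on generalizing V with
  | _ d ih =>
  have step (N' : End K V) (hker : 0 < finrank K (ker N')) :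
      finrank K (ker N') ^ 2 + finrank K (range N') ≤
        finrank K (Subalgebra.centralizer K {N'}) := by
    have hN' := finrank_range_add_finrank_ker N'
    have hres := finrank_range_add_finrank_ker (restrictRange N')
    have := ih _ (by omega) (restrictRange N') rfl
    have := sq_finrank_ker_add_finrank_centralizer_restrictRange_le N'
    nlinarith
  rcases (finrank K (ker N)).eq_zero_or_pos with hker | hker
  · rcases d.eq_zero_or_pos with hd0 | hpos
    · have := finrank_range_add_finrank_ker N
      simp only [hker]
      omega
    have : Nontrivial V := Module.nontrivial_of_finrank_pos (hd ▸ hpos)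
    obtain ⟨a, ha⟩ := N.exists_eigenvalue
    have ha' : 0 < finrank K (ker (N - a • 1)) := by
      rw [hasEigenvalue_iff, eigenspace_def] at ha
      exact Nat.pos_of_ne_zero fun h => ha (Submodule.finrank_eq_zero.1 h)
    have := step _ ha'
    rw [Subalgebra.centralizer_singleton_sub_smul_one] at this
    have := finrank_range_add_finrank_ker N
    have := finrank_range_add_finrank_ker (N - a • 1)
    nlinarith
  · exact step N hker

end Module.End

namespace Matrix

open Fintype

variable {K ι κ : Type*} [Field K] [Fintype ι] [Fintype κ]

theorem sq_card_sub_rank_add_rank_le_finrank_centralizer [IsAlgClosed K] [DecidableEq ι]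
    (X : Matrix ι ι K) :
    (card ι - X.rank) ^ 2 + X.rank ≤ finrank K (Subalgebra.centralizer K {X}) := by
  have hrk := finrank_range_add_finrank_ker (toLin' X)
  rw [Module.finrank_fintype_fun_eq_card] at hrk
  have hX : X.rank = finrank K (range (toLin' X)) := rfl
  calc (card ι - X.rank) ^ 2 + X.rank
      = finrank K (ker (toLin' X)) ^ 2 + finrank K (range (toLin' X)) := by
        rw [hX, ← hrk, Nat.add_sub_cancel_left]
    _ ≤ _ := Module.End.sq_finrank_ker_add_finrank_range_le_finrank_centralizer (toLin' X)
    _ = _ := Subalgebra.finrank_centralizer_singleton_congr toLinAlgEquiv' X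

lemma fromBlocks_mul_offDiag_eq_iff {P : Matrix ι ι K} {Q : Matrix κ κ K} {B B' : Matrix ι κ K}
    {C C' : Matrix κ ι K} :
    fromBlocks P B' C' Q * fromBlocks 0 B C 0 = fromBlocks 0 B C 0 * fromBlocks P B' C' Q ↔
      (P * B = B * Q ∧ Q * C = C * P) ∧ (B' * C = B * C' ∧ C' * B = C * B') := by
  simp only [fromBlocks_multiply, fromBlocks_inj, Matrix.mul_zero, Matrix.zero_mul, add_zero,
    zero_add]
  tauto

/-- The off-diagonal blocks of `⁅fromBlocks P 0 0 Q, fromBlocks 0 B C 0⁆`. -/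
def diagBracket (B : Matrix ι κ K) (C : Matrix κ ι K) :
    Matrix ι ι K × Matrix κ κ K →ₗ[K] Matrix ι κ K × Matrix κ ι K where
  toFun PQ := (PQ.1 * B - B * PQ.2, PQ.2 * C - C * PQ.1)
  map_add' _ _ := by
    ext : 1 <;> simp only [Prod.fst_add, Prod.snd_add, Matrix.add_mul, Matrix.mul_add] <;> abel
  map_smul' _ _ := by
    ext : 1 <;> simp [smul_sub]

lemma diagBracket_apply (B : Matrix ι κ K) (C : Matrix κ ι K) (P : Matrix ι ι K)
    (Q : Matrix κ κ K) : diagBracket B C (P, Q) = (P * B - B * Q, Q * C - C * P) := rfl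

lemma mem_ker_diagBracket {B : Matrix ι κ K} {C : Matrix κ ι K} {P : Matrix ι ι K}
    {Q : Matrix κ κ K} : (P, Q) ∈ ker (diagBracket B C) ↔ P * B = B * Q ∧ Q * C = C * P := by
  simp [diagBracket_apply, sub_eq_zero]

def offDiagCentralizer (B : Matrix ι κ K) (C : Matrix κ ι K) :
    Submodule K (Matrix ι κ K × Matrix κ ι K) where
  carrier := {BC' | BC'.1 * C = B * BC'.2 ∧ BC'.2 * B = C * BC'.1}
  zero_mem' := by simp
  add_mem' := by
    rintro _ _ ⟨h₁, h₂⟩ ⟨h₁', h₂'⟩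
    simp_all [Matrix.add_mul, Matrix.mul_add]
  smul_mem' := by
    rintro _ _ ⟨h₁, h₂⟩
    simp_all

lemma finrank_centralizer_fromBlocks_zero_zero_le [DecidableEq ι] [DecidableEq κ]
    (B : Matrix ι κ K) (C : Matrix κ ι K) :
    finrank K (Subalgebra.centralizer K {fromBlocks 0 B C 0}) ≤
      finrank K (ker (diagBracket B C)) + finrank K (offDiagCentralizer B C) := by
  have hmem (Y : Subalgebra.centralizer K {fromBlocks 0 B C 0}) :
      (Y.1.toBlocks₁₁, Y.1.toBlocks₂₂) ∈ ker (diagBracket B C) ∧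
        (Y.1.toBlocks₁₂, Y.1.toBlocks₂₁) ∈ offDiagCentralizer B C := by
    have hY : fromBlocks 0 B C 0 * Y.1 = Y.1 * fromBlocks 0 B C 0 :=
      Subalgebra.mem_centralizer_singleton_iff.1 Y.2
    rw [← fromBlocks_toBlocks Y.1, eq_comm, fromBlocks_mul_offDiag_eq_iff] at hY
    exact ⟨mem_ker_diagBracket.2 hY.1, hY.2⟩
  let f : Subalgebra.centralizer K {fromBlocks 0 B C 0} →ₗ[K]
      ker (diagBracket B C) × offDiagCentralizer B C :=
    { toFun Y := (⟨_, (hmem Y).1⟩, ⟨_, (hmem Y).2⟩)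
      map_add' _ _ := rfl
      map_smul' _ _ := rfl }
  have hf : Function.Injective f := by
    intro Y Y' h
    have h₁ : (Y.1.toBlocks₁₁, Y.1.toBlocks₂₂) = (Y'.1.toBlocks₁₁, Y'.1.toBlocks₂₂) :=
      congr_arg (fun p => p.1.1) h
    have h₂ : (Y.1.toBlocks₁₂, Y.1.toBlocks₂₁) = (Y'.1.toBlocks₁₂, Y'.1.toBlocks₂₁) :=
      congr_arg (fun p => p.2.1) h
    simp only [Prod.mk.injEq] at h₁ h₂
    rw [← Subtype.val_inj, ← fromBlocks_toBlocks Y.1, ← fromBlocks_toBlocks Y'.1, h₁.1, h₁.2,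
      h₂.1, h₂.2]
  simpa using finrank_le_finrank_of_injective hf

/-- The trace form `tr (X Y)` on off-diagonal block matrices `X = [0 U; V 0]`,
`Y = [0 B'; C' 0]`. -/
def offDiagTracePairing :
    Matrix ι κ K × Matrix κ ι K →ₗ[K] Module.Dual K (Matrix ι κ K × Matrix κ ι K) :=
  LinearMap.mk₂ K (fun UV BC => trace (UV.1 * BC.2) + trace (UV.2 * BC.1))
    (fun _ _ _ => by simp only [Prod.fst_add, Prod.snd_add, Matrix.add_mul, trace_add]; ring)
    (fun _ _ _ => by simp [mul_add])
    (fun _ _ _ => by simp only [Prod.fst_add, Prod.snd_add, Matrix.mul_add, trace_add]; ring)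
    (fun _ _ _ => by simp [mul_add])

lemma offDiagTracePairing_injective :
    Function.Injective
      (offDiagTracePairing : _ →ₗ[K] Module.Dual K (Matrix ι κ K × Matrix κ ι K)) := by
  rw [← LinearMap.ker_eq_bot, eq_bot_iff]
  rintro ⟨U, V⟩ h
  have hU (C' : Matrix κ ι K) : trace (U * C') = trace ((0 : Matrix ι κ K) * C') := by
    simpa [offDiagTracePairing] using congr($h (0, C'))
  have hV (B' : Matrix ι κ K) : trace (V * B') = trace ((0 : Matrix κ ι K) * B') := by
    simpa [offDiagTracePairing] using congr($h (B', 0))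
  simp [ext_iff_trace_mul_right.2 hU, ext_iff_trace_mul_right.2 hV]

lemma map_range_diagBracket_le_dualAnnihilator (B : Matrix ι κ K) (C : Matrix κ ι K) :
    (range (diagBracket B C)).map offDiagTracePairing ≤
      (offDiagCentralizer B C).dualAnnihilator := by
  rintro _ ⟨_, ⟨⟨P, Q⟩, rfl⟩, rfl⟩
  rw [Submodule.mem_dualAnnihilator]
  rintro ⟨B', C'⟩ ⟨hB', hC'⟩
  simp only at hB' hC'
  have e₁ : trace (P * B * C') = trace (C * P * B') := by
    rw [Matrix.mul_assoc, ← hB', ← Matrix.mul_assoc, trace_mul_cycle]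
  have e₂ : trace (B * Q * C') = trace (Q * C * B') := by
    rw [Matrix.mul_assoc, trace_mul_comm, Matrix.mul_assoc, hC', ← Matrix.mul_assoc]
  simp [offDiagTracePairing, diagBracket_apply, Matrix.sub_mul, e₁, e₂]

lemma finrank_range_diagBracket_add_finrank_offDiagCentralizer_le (B : Matrix ι κ K)
    (C : Matrix κ ι K) :
    finrank K (range (diagBracket B C)) + finrank K (offDiagCentralizer B C) ≤
      2 * (card ι * card κ) := by
  have hmap := (Submodule.equivMapOfInjective _ offDiagTracePairing_injective
    (range (diagBracket B C))).finrank_eq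
  have hle := Submodule.finrank_mono (map_range_diagBracket_le_dualAnnihilator B C)
  have hann := Subspace.finrank_add_finrank_dualAnnihilator_eq (offDiagCentralizer B C)
  simp only [finrank_prod, finrank_matrix, finrank_self, mul_one] at hann
  rw [Nat.mul_comm (card κ)] at hann
  omega

lemma rank_fromBlocks_zero_zero_le [DecidableEq ι] (B : Matrix ι κ K) (C : Matrix κ ι K) :
    (fromBlocks 0 B C 0).rank ≤ 2 * card ι := by
  have hfac : fromBlocks 0 B C 0 =
      (fromBlocks 1 0 0 C : Matrix (ι ⊕ κ) (ι ⊕ ι) K) *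
        (fromBlocks 0 B 1 0 : Matrix (ι ⊕ ι) (ι ⊕ κ) K) := by
    rw [fromBlocks_multiply]
    simp
  calc (fromBlocks 0 B C 0).rank
      ≤ (fromBlocks 1 0 0 C : Matrix (ι ⊕ κ) (ι ⊕ ι) K).rank := hfac ▸ rank_mul_le_left _ _
    _ ≤ card (ι ⊕ ι) := rank_le_card_width _
    _ = 2 * card ι := by rw [card_sum, two_mul]

lemma sq_card_sub_card_add_finrank_offDiagCentralizer_le (h : card ι ≤ card κ)
    (B : Matrix ι κ K) (C : Matrix κ ι K) :
    (card κ - card ι) ^ 2 + finrank K (offDiagCentralizer B C) ≤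
      finrank K (ker (diagBracket B C)) := by
  have hdual := finrank_range_diagBracket_add_finrank_offDiagCentralizer_le B C
  have hrn := finrank_range_add_finrank_ker (diagBracket B C)
  simp only [finrank_prod, finrank_matrix, finrank_self, mul_one] at hrn
  obtain ⟨e, he⟩ := Nat.exists_eq_add_of_le h
  rw [he, Nat.add_sub_cancel_left]
  rw [he] at hrn hdual
  nlinarith

lemma sq_card_sub_card_add_two_mul_card_le_finrank_centralizer [DecidableEq ι] [DecidableEq κ]
    [IsAlgClosed K] (h : card ι ≤ card κ) (B : Matrix ι κ K) (C : Matrix κ ι K) :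
    (card κ - card ι) ^ 2 + 2 * card ι ≤
      finrank K (Subalgebra.centralizer K {fromBlocks 0 B C 0}) := by
  have hcent := sq_card_sub_rank_add_rank_le_finrank_centralizer (fromBlocks 0 B C 0)
  obtain ⟨u, hu⟩ := Nat.exists_eq_add_of_le (rank_fromBlocks_zero_zero_le B C)
  have hsub : card (ι ⊕ κ) - (fromBlocks 0 B C 0).rank = (card κ - card ι) + u := by
    rw [card_sum]
    omega
  rw [hsub] at hcent
  have hu2 : u ≤ u ^ 2 := Nat.le_self_pow two_ne_zero u
  nlinarith [Nat.zero_le ((card κ - card ι) * u)]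

theorem sq_card_sub_card_add_card_le_finrank_ker_diagBracket [DecidableEq ι] [DecidableEq κ]
    [IsAlgClosed K] (h : card ι ≤ card κ) (B : Matrix ι κ K) (C : Matrix κ ι K) :
    (card κ - card ι) ^ 2 + card ι ≤ finrank K (ker (diagBracket B C)) := by
  have := sq_card_sub_card_add_two_mul_card_le_finrank_centralizer h B C
  have := finrank_centralizer_fromBlocks_zero_zero_le B C
  have := sq_card_sub_card_add_finrank_offDiagCentralizer_le h B C
  omega

lemma finrank_ker_diagBracket_reindex {κ' : Type*} [Fintype κ'] (e : κ ≃ κ')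
    (B : Matrix ι κ K) (C : Matrix κ ι K) :
    finrank K (ker (diagBracket (reindex (Equiv.refl ι) e B) (reindex e (Equiv.refl ι) C))) =
      finrank K (ker (diagBracket B C)) := by
  let φ := (LinearEquiv.refl K (Matrix ι ι K)).prodCongr (reindexLinearEquiv K K e e)
  let ψ := (reindexLinearEquiv K K (Equiv.refl ι) e).prodCongr
    (reindexLinearEquiv K K e (Equiv.refl ι))
  have hcomm : diagBracket (reindex (Equiv.refl ι) e B) (reindex e (Equiv.refl ι) C) ∘ₗ φ =
      ψ ∘ₗ diagBracket B C := by
    refine LinearMap.ext fun ⟨P, Q⟩ => ?_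
    let r := reindexLinearEquiv K K (Equiv.refl ι) e
    let r' := reindexLinearEquiv K K e (Equiv.refl ι)
    have h₁ : P * reindex (Equiv.refl ι) e B = r (P * B) :=
      reindexLinearEquiv_mul K K (Equiv.refl ι) (Equiv.refl ι) e P B
    have h₂ : reindex (Equiv.refl ι) e B * reindexLinearEquiv K K e e Q = r (B * Q) :=
      reindexLinearEquiv_mul K K (Equiv.refl ι) e e B Q
    have h₃ : reindexLinearEquiv K K e e Q * reindex e (Equiv.refl ι) C = r' (Q * C) :=
      reindexLinearEquiv_mul K K e e (Equiv.refl ι) Q C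
    have h₄ : reindex e (Equiv.refl ι) C * P = r' (C * P) :=
      reindexLinearEquiv_mul K K e (Equiv.refl ι) (Equiv.refl ι) C P
    simp only [φ, ψ, LinearMap.comp_apply, LinearEquiv.coe_coe, LinearEquiv.prodCongr_apply,
      LinearEquiv.refl_apply, diagBracket_apply, h₁, h₂, h₃, h₄, map_sub]
    rfl
  have hker := congr(ker $hcomm)
  rw [LinearEquiv.ker_comp, LinearMap.ker_comp, Submodule.comap_equiv_eq_map_symm] at hker
  rw [← hker, LinearEquiv.finrank_map_eq]

lemma eq_diagonal_diag_of_commute_diagonal [DecidableEq ι] {d : ι → K}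
    (hd : Function.Injective d) {P : Matrix ι ι K} (h : Commute P (diagonal d)) :
    P = diagonal P.diag := by
  ext i j
  rcases eq_or_ne i j with rfl | hij
  · simp
  have hij' : P i j * (d j - d i) = 0 := by
    have := congr_fun (congr_fun h.eq i) j
    rw [mul_diagonal, diagonal_mul] at this
    linear_combination this
  rw [diagonal_apply_ne _ hij]
  exact (mul_eq_zero.1 hij').resolve_right (sub_ne_zero.2 (hd.ne hij.symm))

theorem finrank_ker_diagBracket_fromCols_fromRows_le [DecidableEq ι] {ω : Type*} [Fintype ω]
    {d : ι → K} (hd : Function.Injective d) (hd₀ : ∀ i, d i ≠ 0) :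
    finrank K (ker (diagBracket (fromCols (1 : Matrix ι ι K) (0 : Matrix ι ω K))
      (fromRows (diagonal d) 0))) ≤ card ω ^ 2 + card ι := by
  let f : ker (diagBracket (fromCols (1 : Matrix ι ι K) (0 : Matrix ι ω K))
      (fromRows (diagonal d) 0)) →ₗ[K] (ι → K) × Matrix ω ω K :=
    { toFun PQ := (PQ.1.1.diag, PQ.1.2.toBlocks₂₂)
      map_add' _ _ := rfl
      map_smul' _ _ := rfl }
  have hf : Function.Injective f := by
    rw [injective_iff_map_eq_zero]
    rintro ⟨⟨P, Q⟩, hPQ⟩ h0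
    obtain ⟨hdiag, h₂₂⟩ : P.diag = 0 ∧ Q.toBlocks₂₂ = 0 := Prod.ext_iff.1 h0
    obtain ⟨h₁, h₂⟩ := mem_ker_diagBracket.1 hPQ
    rw [← fromBlocks_toBlocks Q, h₂₂] at h₁ h₂
    simp only [mul_fromCols, fromCols_mul_fromBlocks, fromBlocks_mul_fromRows, fromRows_mul,
      Matrix.mul_one, Matrix.one_mul, Matrix.mul_zero, Matrix.zero_mul, add_zero,
      fromCols_ext_iff, fromRows_ext_iff] at h₁ h₂
    have hP : P = 0 := by
      rw [eq_diagonal_diag_of_commute_diagonal hd (h₁.1 ▸ h₂.1 : P * diagonal d = diagonal d * P),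
        hdiag, diagonal_zero']
    have h₂₁ : Q.toBlocks₂₁ = 0 := by
      ext i j
      simpa [mul_diagonal, hd₀] using congr_fun (congr_fun h₂.2 i) j
    have hQ : Q = 0 := by
      rw [← fromBlocks_toBlocks Q, ← h₁.1, ← h₁.2, hP, h₂₁, h₂₂, fromBlocks_zero]
    simp [hP, hQ]
  simpa [finrank_matrix, sq, add_comm] using finrank_le_finrank_of_injective hf

end Matrix

section BlockDiagonal

variable {m k : ℕ}

lemma mem_diagPair_iff {Y : Matrix (Fin m ⊕ Fin k) (Fin m ⊕ Fin k) ℂ} :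
    Y ∈ diagPair m k ↔ Y.toBlocks₁₂ = 0 ∧ Y.toBlocks₂₁ = 0 := by
  simp [diagPair, ← Matrix.ext_iff, toBlocks₁₂, toBlocks₂₁]

lemma trace_mul_fromBlocks_zero_zero (X : Matrix (Fin m ⊕ Fin k) (Fin m ⊕ Fin k) ℂ)
    (P : Matrix (Fin m) (Fin m) ℂ) (Q : Matrix (Fin k) (Fin k) ℂ) :
    (X * fromBlocks P 0 0 Q).trace = (X.toBlocks₁₁ * P).trace + (X.toBlocks₂₂ * Q).trace := by
  conv_lhs => rw [← fromBlocks_toBlocks X]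
  simp [fromBlocks_multiply, Matrix.trace, Fintype.sum_sum_type]

lemma mem_perpOf_diagPair_iff {X : Matrix (Fin m ⊕ Fin k) (Fin m ⊕ Fin k) ℂ} :
    X ∈ perpOf (diagPair m k : Set _) ↔ X.toBlocks₁₁ = 0 ∧ X.toBlocks₂₂ = 0 := by
  have hdiag (P : Matrix (Fin m) (Fin m) ℂ) (Q : Matrix (Fin k) (Fin k) ℂ) :
      fromBlocks P 0 0 Q ∈ diagPair m k := by
    simp [mem_diagPair_iff]
  constructor
  · intro hX
    refine ⟨ext_iff_trace_mul_right.2 fun P => ?_, ext_iff_trace_mul_right.2 fun Q => ?_⟩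
    · simpa [trace_mul_fromBlocks_zero_zero] using hX _ (hdiag P 0)
    · simpa [trace_mul_fromBlocks_zero_zero] using hX _ (hdiag 0 Q)
  · rintro ⟨h₁₁, h₂₂⟩ Y hY
    obtain ⟨h₁₂, h₂₁⟩ := mem_diagPair_iff.1 hY
    rw [← fromBlocks_toBlocks Y, h₁₂, h₂₁, trace_mul_fromBlocks_zero_zero, h₁₁, h₂₂]
    simp

noncomputable def fromBlocksDiagₗ (m k : ℕ) :
    Matrix (Fin m) (Fin m) ℂ × Matrix (Fin k) (Fin k) ℂ →ₗ[ℂ]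
      Matrix (Fin m ⊕ Fin k) (Fin m ⊕ Fin k) ℂ where
  toFun PQ := fromBlocks PQ.1 0 0 PQ.2
  map_add' _ _ := by simp [fromBlocks_add]
  map_smul' _ _ := by simp [fromBlocks_smul]

lemma finrank_centIn_diagPair_fromBlocks (B : Matrix (Fin m) (Fin k) ℂ)
    (C : Matrix (Fin k) (Fin m) ℂ) :
    finrank ℂ (centIn (diagPair m k) (fromBlocks 0 B C 0)) =
      finrank ℂ (ker (diagBracket B C)) := by
  have hinj : Function.Injective (fromBlocksDiagₗ m k) := fun PQ PQ' h => by
    obtain ⟨h₁, -, -, h₂⟩ := fromBlocks_inj.1 h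
    exact Prod.ext h₁ h₂
  have hmap : (ker (diagBracket B C)).map (fromBlocksDiagₗ m k) =
      centIn (diagPair m k) (fromBlocks 0 B C 0) := by
    ext Y
    simp only [Submodule.mem_map]
    change _ ↔ Y ∈ diagPair m k ∧ ⁅Y, fromBlocks 0 B C 0⁆ = 0
    rw [Ring.lie_def, sub_eq_zero]
    constructor
    · rintro ⟨⟨P, Q⟩, hPQ, rfl⟩
      refine ⟨by simp [fromBlocksDiagₗ, mem_diagPair_iff], ?_⟩
      exact fromBlocks_mul_offDiag_eq_iff.2 ⟨mem_ker_diagBracket.1 hPQ, by simp⟩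
    · rintro ⟨hY, hcomm⟩
      obtain ⟨h₁₂, h₂₁⟩ := mem_diagPair_iff.1 hY
      rw [← fromBlocks_toBlocks Y, h₁₂, h₂₁] at hcomm ⊢
      exact ⟨_, mem_ker_diagBracket.2 (fromBlocks_mul_offDiag_eq_iff.1 hcomm).1, rfl⟩
  rw [← hmap, (Submodule.equivMapOfInjective _ hinj _).finrank_eq.symm]

end BlockDiagonal

theorem stmt14_general {m n : ℕ} (hmn : 2 * m ≤ n) :
    IsLeast {d : ℕ | ∃ X ∈ perpOf (diagPair m (n - m) : Set _),
        d = Module.finrank ℂ ↥(centIn (diagPair m (n - m)) X)}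
      ((n - 2 * m) ^ 2 + m) := by
  have lower (B : Matrix (Fin m) (Fin (n - m)) ℂ) (C : Matrix (Fin (n - m)) (Fin m) ℂ) :
      (n - 2 * m) ^ 2 + m ≤ finrank ℂ (centIn (diagPair m (n - m)) (fromBlocks 0 B C 0)) := by
    have := sq_card_sub_card_add_card_le_finrank_ker_diagBracket (by simp; omega) B C
    rw [finrank_centIn_diagPair_fromBlocks]
    simpa [show n - m - m = n - 2 * m by omega] using this
  let e : Fin m ⊕ Fin (n - 2 * m) ≃ Fin (n - m) := finSumFinEquiv.trans (finCongr (by omega))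
  let d : Fin m → ℂ := fun i => (i : ℂ) + 1
  have hd : Function.Injective d := fun i j h => Fin.ext (by exact_mod_cast add_right_cancel h)
  refine ⟨⟨fromBlocks 0 (reindex (Equiv.refl _) e (fromCols 1 0))
    (reindex e (Equiv.refl _) (fromRows (diagonal d) 0)) 0,
    mem_perpOf_diagPair_iff.2 (by simp), le_antisymm (lower _ _) ?_⟩, ?_⟩
  · rw [finrank_centIn_diagPair_fromBlocks, finrank_ker_diagBracket_reindex]
    simpa using finrank_ker_diagBracket_fromCols_fromRows_le (ω := Fin (n - 2 * m)) hd
      fun i => Nat.cast_add_one_ne_zero (i : ℕ)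
  · rintro _ ⟨X, hX, rfl⟩
    obtain ⟨h₁₁, h₂₂⟩ := mem_perpOf_diagPair_iff.1 hX
    rw [← fromBlocks_toBlocks X, h₁₁, h₂₂]
    exact lower _ _

/-- For `1 ≤ m`, `2m ≤ n` and `h = gl_m(ℂ) ⊕ gl_{n−m}(ℂ)` block-diagonal in `gl_n(ℂ)`, the
minimum over `X ∈ h^⊥` of the dimension of the centralizer of `X` in `h` is
`(n−2m)² + m` (and it is attained; in particular some `X ∈ h^⊥` has centralizer in `h` of
dimension exactly `(n−2m)² + m`). -/
theorem stmt14 {m n : ℕ} (hm : 1 ≤ m) (hmn : 2 * m ≤ n) :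
    IsLeast {d : ℕ | ∃ X ∈ perpOf (diagPair m (n - m) : Set _),
        d = Module.finrank ℂ ↥(centIn (diagPair m (n - m)) X)}
      ((n - 2 * m) ^ 2 + m) :=
  stmt14_general hmn
end

section
/- Let n ≥ 1 and let h ⊆ gl_{2n+1}(ℂ) be the image of sp_{2n}(ℂ) under the embedding X ↦ diag(X,0) into the upper-left 2n×2n block. Let h^⊥ be the orthogonal complement of h in gl_{2n+1}(ℂ) with respect to the trace form. Then there exists X ∈ h^⊥ such that {Y ∈ h : [Y,X] = 0} = 0; i.e., the generic stabilizer of h acting on h^⊥ is trivial. -/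
/-! Common definitions: `gl n` = n×n complex matrices with commutator bracket;
sl₂-triples; Jordan type of a nilpotent matrix; centralizers; sphericality. -/

open Matrix

attribute [local instance 100] LieRing.ofAssociativeRing

/-- The embedding `X ↦ diag(X, 0)` of `gl_{2n}(ℂ)` into the upper-left block of
`gl_{2n+1}(ℂ)`. -/
noncomputable def embUL (n : ℕ) :
    Matrix (Fin n ⊕ Fin n) (Fin n ⊕ Fin n) ℂ →ₗ[ℂ]
      Matrix ((Fin n ⊕ Fin n) ⊕ Fin 1) ((Fin n ⊕ Fin n) ⊕ Fin 1) ℂ where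
  toFun X := Matrix.fromBlocks X 0 0 0
  map_add' X Y := by
    ext i j
    cases i <;> cases j <;> simp [Matrix.add_apply]
  map_smul' c X := by
    ext i j
    cases i <;> cases j <;> simp [Matrix.smul_apply]

/-- The image of `sp_{2n}(ℂ)` in `gl_{2n+1}(ℂ)` under the upper-left block embedding, as a
subspace of `gl_{2n+1}(ℂ)`. -/
noncomputable def spUL (n : ℕ) :
    Submodule ℂ (Matrix ((Fin n ⊕ Fin n) ⊕ Fin 1) ((Fin n ⊕ Fin n) ⊕ Fin 1) ℂ) :=
  (LieAlgebra.Symplectic.sp (Fin n) ℂ).toSubmodule.map (embUL n)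

/-! The witness is `X = [[D, 𝟙], [𝟙ᵀ, 0]]` with `D = diag(c, c)` for an injective `c`.
A symplectic `Z` satisfies `Z (inr a) (inr a) = -Z (inl a) (inl a)`, so `tr (D Z) = 0` and
`X ⊥ h`. If `diag(Z, 0)` commutes with `X`, then `Z` commutes with `D`, hence only mixes the basis
vectors `inl a` and `inr a`, and all row and column sums of `Z` vanish; on each `2 × 2` block
`[[p, q], [r, -p]]` these sums force `p = q = r = 0`. -/

open LieAlgebra.Symplectic

lemma Matrix.trace_fromBlocks {m n R : Type*} [Fintype m] [Fintype n] [AddCommMonoid R]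
    (A : Matrix m m R) (B : Matrix m n R) (C : Matrix n m R) (D : Matrix n n R) :
    trace (fromBlocks A B C D) = trace A + trace D := by
  simp [trace, Fintype.sum_sum_type]

lemma Matrix.apply_eq_zero_of_commute_diagonal {m R : Type*} [Fintype m] [DecidableEq m]
    [CommRing R] [NoZeroDivisors R] {d : m → R} {Z : Matrix m m R}
    (h : Commute (diagonal d) Z) {u v : m} (huv : d u ≠ d v) : Z u v = 0 := by
  have h' := congrFun₂ h.eq u v
  simp only [diagonal_mul, mul_diagonal] at h'
  have : (d u - d v) * Z u v = 0 := by linear_combination h'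
  exact (mul_eq_zero.1 this).resolve_left (sub_ne_zero.2 huv)

section Symplectic

variable {l R : Type*} [Fintype l] [DecidableEq l] [CommRing R]
  {Z : Matrix (l ⊕ l) (l ⊕ l) R} {c : l → R}

lemma mem_sp_apply_inr_inr (hZ : Z ∈ sp l R) (a : l) :
    Z (.inr a) (.inr a) = -Z (.inl a) (.inl a) := by
  rw [sp, mem_skewAdjointMatricesLieSubalgebra, mem_skewAdjointMatricesSubmodule] at hZ
  simpa [mul_apply, J, fromBlocks, Fintype.sum_sum_type, one_apply] using
    congrFun₂ hZ (.inr a) (.inl a)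

lemma trace_diagonal_elim_mul_eq_zero_of_mem_sp (hZ : Z ∈ sp l R) :
    trace (diagonal (Sum.elim c c) * Z) = 0 := by
  simp [trace, diagonal_mul, Fintype.sum_sum_type, mem_sp_apply_inr_inr hZ]

lemma mulVec_one_apply_of_commute_diagonal_elim [NoZeroDivisors R] (hc : Function.Injective c)
    (h : Commute (diagonal (Sum.elim c c)) Z) {u : l ⊕ l} {a : l} (hu : Sum.elim c c u = c a) :
    (Z *ᵥ 1) u = Z u (.inl a) + Z u (.inr a) := by
  have hoff : ∀ v, Sum.elim c c v ≠ c a → Z u v = 0 := fun v hv =>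
    apply_eq_zero_of_commute_diagonal h (hu ▸ hv.symm)
  rw [mulVec, dotProduct, Fintype.sum_sum_type]
  simp only [Pi.one_apply, mul_one]
  rw [Finset.sum_eq_single a (fun b _ hb => hoff (.inl b) (hc.ne hb)) (by simp),
    Finset.sum_eq_single a (fun b _ hb => hoff (.inr b) (hc.ne hb)) (by simp)]

lemma eq_zero_of_mem_sp_of_commute_diagonal_elim [IsDomain R] [NeZero (2 : R)]
    (hc : Function.Injective c) (hZ : Z ∈ sp l R) (h : Commute (diagonal (Sum.elim c c)) Z)
    (hrow : Z *ᵥ 1 = 0) (hcol : 1 ᵥ* Z = 0) : Z = 0 := by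
  have hT : Commute (diagonal (Sum.elim c c)) Zᵀ := by
    simpa [Commute, SemiconjBy, transpose_mul] using congrArg transpose h.eq.symm
  have hpair : ∀ a, Z (.inl a) (.inl a) = 0 ∧ Z (.inl a) (.inr a) = 0 ∧
      Z (.inr a) (.inl a) = 0 ∧ Z (.inr a) (.inr a) = 0 := by
    intro a
    have hs := mem_sp_apply_inr_inr hZ a
    have r₁ := mulVec_one_apply_of_commute_diagonal_elim hc h (u := .inl a) rfl
    have r₂ := mulVec_one_apply_of_commute_diagonal_elim hc h (u := .inr a) rfl
    have c₁ := mulVec_one_apply_of_commute_diagonal_elim hc hT (u := .inl a) rfl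
    rw [hrow] at r₁ r₂
    simp only [← vecMul_transpose, transpose_transpose, hcol, transpose_apply] at c₁
    simp only [Pi.zero_apply] at r₁ r₂ c₁
    have h2p : (2 : R) * Z (.inl a) (.inl a) = 0 := by linear_combination r₂ - c₁ + hs
    have hp := (mul_eq_zero.1 h2p).resolve_left two_ne_zero
    exact ⟨hp, by linear_combination -r₁ - hp, by linear_combination -c₁ - hp,
      by linear_combination hs - hp⟩
  ext u v
  by_cases huv : Sum.elim c c u = Sum.elim c c v
  · rcases u with a | a <;> rcases v with b | b <;>
      obtain rfl : a = b := hc (by simpa using huv) <;> simp [hpair a]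
  · exact apply_eq_zero_of_commute_diagonal h huv

def borderedDiagonal (c : l → R) : Matrix ((l ⊕ l) ⊕ Fin 1) ((l ⊕ l) ⊕ Fin 1) R :=
  fromBlocks (diagonal (Sum.elim c c)) (replicateCol (Fin 1) 1) (replicateRow (Fin 1) 1) 0

lemma trace_borderedDiagonal_mul_fromBlocks_eq_zero_of_mem_sp (hZ : Z ∈ sp l R) :
    trace (borderedDiagonal c * fromBlocks Z 0 0 0) = 0 := by
  simp [borderedDiagonal, fromBlocks_multiply, trace_fromBlocks,
    trace_diagonal_elim_mul_eq_zero_of_mem_sp hZ]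

lemma lie_fromBlocks_borderedDiagonal_eq_zero_iff :
    ⁅fromBlocks Z 0 0 (0 : Matrix (Fin 1) (Fin 1) R), borderedDiagonal c⁆ = 0 ↔
      Commute (diagonal (Sum.elim c c)) Z ∧ Z *ᵥ 1 = 0 ∧ 1 ᵥ* Z = 0 := by
  rw [Ring.lie_def, sub_eq_zero, borderedDiagonal, fromBlocks_multiply, fromBlocks_multiply,
    fromBlocks_inj]
  simp [← replicateCol_mulVec, ← replicateRow_vecMul, Commute, SemiconjBy,
    eq_comm (a := Z * diagonal _), eq_comm (a := (0 : Matrix (Fin 1) (l ⊕ l) R))]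

lemma eq_zero_of_lie_fromBlocks_borderedDiagonal_eq_zero [IsDomain R] [NeZero (2 : R)]
    (hc : Function.Injective c) (hZ : Z ∈ sp l R)
    (h : ⁅fromBlocks Z 0 0 (0 : Matrix (Fin 1) (Fin 1) R), borderedDiagonal c⁆ = 0) : Z = 0 := by
  obtain ⟨hD, hrow, hcol⟩ := lie_fromBlocks_borderedDiagonal_eq_zero_iff.1 h
  exact eq_zero_of_mem_sp_of_commute_diagonal_elim hc hZ hD hrow hcol

end Symplectic

theorem stmt16_general {n : ℕ} :
    ∃ X : Matrix ((Fin n ⊕ Fin n) ⊕ Fin 1) ((Fin n ⊕ Fin n) ⊕ Fin 1) ℂ,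
      X ∈ perpOf (spUL n : Set _) ∧ ∀ Y ∈ spUL n, ⁅Y, X⁆ = 0 → Y = 0 := by
  have hc : Function.Injective fun a : Fin n => ((a : ℕ) : ℂ) :=
    Nat.cast_injective.comp Fin.val_injective
  refine ⟨borderedDiagonal fun a => ((a : ℕ) : ℂ), ?_, ?_⟩
  · rintro _ ⟨Z, hZ, rfl⟩
    exact trace_borderedDiagonal_mul_fromBlocks_eq_zero_of_mem_sp hZ
  · rintro _ ⟨Z, hZ, rfl⟩ h
    rw [eq_zero_of_lie_fromBlocks_borderedDiagonal_eq_zero hc hZ h, map_zero]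

/-- For `h` the image of `sp_{2n}(ℂ)` in `gl_{2n+1}(ℂ)` (upper-left block), there is
`X ∈ h^⊥` whose centralizer in `h` is trivial. -/
theorem stmt16 {n : ℕ} (hn : 1 ≤ n) :
    ∃ X : Matrix ((Fin n ⊕ Fin n) ⊕ Fin 1) ((Fin n ⊕ Fin n) ⊕ Fin 1) ℂ,
      X ∈ perpOf (spUL n : Set _) ∧ ∀ Y ∈ spUL n, ⁅Y, X⁆ = 0 → Y = 0 :=
  stmt16_general
end

section
/- Let sp_4(ℂ) = {X ∈ gl_4(ℂ) : XᵀJ + JX = 0} for the standard invertible skew-symmetric 4×4 matrix J, chosen so that ℂ^4 decomposes as an orthogonal direct sum of two 2-dimensional symplectic subspaces. Let k ⊆ sp_4(ℂ) be the block-diagonal subalgebra sp_2(ℂ) ⊕ sp_2(ℂ) corresponding to this decomposition. Then k is spherical in sp_4(ℂ): there exists a solvable Lie subalgebra b of sp_4(ℂ) with b + k = sp_4(ℂ). -/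
/-! Common definitions: `gl n` = n×n complex matrices with commutator bracket;
sl₂-triples; Jordan type of a nilpotent matrix; centralizers; sphericality. -/

open Matrix

attribute [local instance 100] LieRing.ofAssociativeRing

/-- The standard invertible skew-symmetric 4×4 matrix adapted to the decomposition of `ℂ⁴`
into the orthogonal direct sum of two 2-dimensional symplectic subspaces:
`J = diag(j, j)` with `j = [[0,1],[-1,0]]`. -/
noncomputable def J₄ : Matrix (Fin 2 ⊕ Fin 2) (Fin 2 ⊕ Fin 2) ℂ :=
  Matrix.fromBlocks !![0, 1; -1, 0] 0 0 !![0, 1; -1, 0]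

/-- `sp_4(ℂ) = {X ∈ gl_4(ℂ) : Xᵀ J + J X = 0}` for the block-diagonal `J = diag(j, j)`. -/
noncomputable def sp₄ : LieSubalgebra ℂ (Matrix (Fin 2 ⊕ Fin 2) (Fin 2 ⊕ Fin 2) ℂ) :=
  skewAdjointMatricesLieSubalgebra J₄

/-- The Lie subalgebra of block-diagonal matrices in `gl_4(ℂ)` (with respect to the
decomposition `ℂ⁴ = ℂ² ⊕ ℂ²`). -/
noncomputable def blockDiagLie :
    LieSubalgebra ℂ (Matrix (Fin 2 ⊕ Fin 2) (Fin 2 ⊕ Fin 2) ℂ) where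
  carrier := {X | (∀ i j, X (Sum.inl i) (Sum.inr j) = 0) ∧
    ∀ i j, X (Sum.inr i) (Sum.inl j) = 0}
  zero_mem' := by constructor <;> intro i j <;> simp
  add_mem' := by
    rintro a b ⟨ha1, ha2⟩ ⟨hb1, hb2⟩
    constructor <;> intro i j <;> simp [Matrix.add_apply, ha1, ha2, hb1, hb2]
  smul_mem' := by
    rintro c a ⟨ha1, ha2⟩
    constructor <;> intro i j <;> simp [Matrix.smul_apply, ha1, ha2]
  lie_mem' := by
    intro a b ha hb
    obtain ⟨ha1, ha2⟩ := ha
    obtain ⟨hb1, hb2⟩ := hb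
    have hmul : ∀ x y : Matrix (Fin 2 ⊕ Fin 2) (Fin 2 ⊕ Fin 2) ℂ,
        (∀ i j, x (Sum.inl i) (Sum.inr j) = 0) → (∀ i j, x (Sum.inr i) (Sum.inl j) = 0) →
        (∀ i j, y (Sum.inl i) (Sum.inr j) = 0) → (∀ i j, y (Sum.inr i) (Sum.inl j) = 0) →
        (∀ i j, (x * y) (Sum.inl i) (Sum.inr j) = 0) ∧
          ∀ i j, (x * y) (Sum.inr i) (Sum.inl j) = 0 := by
      intro x y hx1 hx2 hy1 hy2
      constructor <;> intro i j <;>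
        · rw [Matrix.mul_apply, Fintype.sum_sum_type]
          simp [hx1, hx2, hy1, hy2]
    refine ⟨fun i j => ?_, fun i j => ?_⟩
    · rw [Ring.lie_def, Matrix.sub_apply, (hmul a b ha1 ha2 hb1 hb2).1 i j,
        (hmul b a hb1 hb2 ha1 ha2).1 i j, sub_zero]
    · rw [Ring.lie_def, Matrix.sub_apply, (hmul a b ha1 ha2 hb1 hb2).2 i j,
        (hmul b a hb1 hb2 ha1 ha2).2 i j, sub_zero]

/-! Take for `b` the stabiliser in `sp₄` of the flag spanned successively by the columns
`e₁ + e₄, e₂ + e₃, e₃, e₂ + e₄` of `flagBasis`. Conjugated by `flagBasis` it becomes upper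
triangular, so it is solvable: each commutator of triangular matrices is supported one
diagonal further above the main one. An element of `sp₄` lies in `k` as soon as its upper-right
`2 × 2` block vanishes, because symplecticity determines the lower-left block from it. Hence
`b + k = sp₄` once every `2 × 2` matrix is the upper-right block of some element of `b`, and
`flagLift B` is such an element. -/

namespace Matrix

variable {ι R : Type*} {b : ι → ℕ}

/-- For `d = 0` this is `Matrix.BlockTriangular M b`. -/
def BlockTriangularFrom [Zero R] (M : Matrix ι ι R) (b : ι → ℕ) (d : ℕ) : Prop :=
  ∀ ⦃i j⦄, b j < b i + d → M i j = 0

namespace BlockTriangularFrom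

theorem mono [Zero R] {M : Matrix ι ι R} {d e : ℕ} (h : d ≤ e)
    (hM : M.BlockTriangularFrom b e) : M.BlockTriangularFrom b d :=
  fun _ _ hij => hM (by omega)

theorem mul [Fintype ι] [NonUnitalNonAssocSemiring R] {M N : Matrix ι ι R} {d e : ℕ}
    (hM : M.BlockTriangularFrom b d) (hN : N.BlockTriangularFrom b e) :
    (M * N).BlockTriangularFrom b (d + e) := by
  intro i j hij
  rw [mul_apply]
  refine Finset.sum_eq_zero fun k _ => ?_
  rcases lt_or_ge (b k) (b i + d) with hk | hk
  · rw [hM hk, zero_mul]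
  · rw [hN (by omega), mul_zero]

theorem lie [Fintype ι] [Ring R] {M N : Matrix ι ι R} {d e : ℕ}
    (hM : M.BlockTriangularFrom b d) (hN : N.BlockTriangularFrom b e) :
    (⁅M, N⁆).BlockTriangularFrom b (d + e) := by
  intro i j hij
  rw [Ring.lie_def, sub_apply, hM.mul hN hij, (hN.mul hM) (by omega), sub_zero]

theorem diag_mul [Fintype ι] [NonUnitalNonAssocSemiring R] (hb : Function.Injective b)
    {M N : Matrix ι ι R} (hM : M.BlockTriangular b) (hN : N.BlockTriangular b) (i : ι) :
    (M * N) i i = M i i * N i i := by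
  rw [mul_apply]
  refine Fintype.sum_eq_single i fun k hki => ?_
  rcases lt_or_gt_of_ne (hb.ne hki) with hk | hk
  · rw [hM hk, zero_mul]
  · rw [hN hk, mul_zero]

theorem lie_succ [Fintype ι] [CommRing R] (hb : Function.Injective b)
    {M N : Matrix ι ι R} {n : ℕ} (hM : M.BlockTriangularFrom b n)
    (hN : N.BlockTriangularFrom b n) :
    (⁅M, N⁆).BlockTriangularFrom b (n + 1) := by
  rcases n with _ | n
  · intro i j hij
    rcases (Nat.lt_succ_iff.mp hij).lt_or_eq with hlt | heq
    · exact (hM.lie hN) hlt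
    · obtain rfl := hb heq
      rw [Ring.lie_def, sub_apply, diag_mul hb hM hN, diag_mul hb hN hM, mul_comm, sub_self]
  · exact (hM.lie hN).mono (by omega)

theorem eq_zero [Zero R] {M : Matrix ι ι R} {d : ℕ} (hd : ∀ i, b i < d)
    (hM : M.BlockTriangularFrom b d) : M = 0 :=
  ext fun i j => hM (by have := hd j; omega)

end BlockTriangularFrom

variable [Fintype ι] [DecidableEq ι] [CommRing R]

variable (R b) in
abbrev blockTriangularLieSubalgebra : LieSubalgebra R (Matrix ι ι R) :=
  lieSubalgebraOfSubalgebra R _ (blockTriangularSubalgebra R R b)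

variable (R b) in
def blockTriangularFromLieIdeal (d : ℕ) : LieIdeal R (blockTriangularLieSubalgebra R b) where
  carrier := {M | (M : Matrix ι ι R).BlockTriangularFrom b d}
  zero_mem' _ _ _ := rfl
  add_mem' {M N} hM hN i j hij := by
    change ((M : Matrix ι ι R) + N) i j = 0
    rw [add_apply, hM hij, hN hij, add_zero]
  smul_mem' c M hM i j hij := by
    change (c • (M : Matrix ι ι R)) i j = 0
    rw [smul_apply, hM hij, smul_zero]
  lie_mem {M N} hN := by
    have := (show (M : Matrix ι ι R).BlockTriangularFrom b 0 from M.2).lie hN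
    rwa [zero_add] at this

theorem derivedSeries_le_blockTriangularFromLieIdeal (hb : Function.Injective b) (n : ℕ) :
    LieAlgebra.derivedSeries R (blockTriangularLieSubalgebra R b) n ≤
      blockTriangularFromLieIdeal R b n := by
  induction n with
  | zero => exact fun M _ => M.2
  | succ n ih =>
    rw [LieAlgebra.derivedSeries_def, LieAlgebra.derivedSeriesOfIdeal_succ,
      ← LieAlgebra.derivedSeries_def, LieSubmodule.lie_le_iff]
    exact fun M hM N hN => BlockTriangularFrom.lie_succ hb (ih hM) (ih hN)

theorem isSolvable_blockTriangularLieSubalgebra (hb : Function.Injective b) :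
    LieAlgebra.IsSolvable (blockTriangularLieSubalgebra R b) := by
  refine LieAlgebra.IsSolvable.mk (R := R) (k := Finset.univ.sup b + 1)
    (eq_bot_iff.mpr fun M hM => ?_)
  have hd : ∀ i, b i < Finset.univ.sup b + 1 :=
    fun i => Nat.lt_succ_of_le (Finset.le_sup (Finset.mem_univ i))
  rw [LieSubmodule.mem_bot]
  exact Subtype.ext ((derivedSeries_le_blockTriangularFromLieIdeal hb _ hM).eq_zero hd)

end Matrix

def flagBasis : Matrix (Fin 2 ⊕ Fin 2) (Fin 2 ⊕ Fin 2) ℂ :=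
  fromBlocks !![1, 0; 0, 1] !![0, 0; 0, 1] !![0, 1; 1, 0] !![1, 0; 0, 1]

def flagBasisInv : Matrix (Fin 2 ⊕ Fin 2) (Fin 2 ⊕ Fin 2) ℂ :=
  fromBlocks !![1, 0; 1, 1] !![0, 0; 0, -1] !![-1, -1; -1, 0] !![1, 1; 0, 1]

theorem flagBasis_mul_flagBasisInv : flagBasis * flagBasisInv = 1 := by
  ext (i | i) (j | j) <;> fin_cases i <;> fin_cases j <;>
    simp [flagBasis, flagBasisInv, mul_apply, Fintype.sum_sum_type, Fin.sum_univ_two, one_apply]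

instance invertibleFlagBasis : Invertible flagBasis :=
  invertibleOfRightInverse _ _ flagBasis_mul_flagBasisInv

def flagIndex : Fin 2 ⊕ Fin 2 → ℕ := Sum.elim (↑) (2 + ↑·)

theorem flagIndex_injective : Function.Injective flagIndex := by
  decide

noncomputable def flagStabilizer : LieSubalgebra ℂ (Matrix (Fin 2 ⊕ Fin 2) (Fin 2 ⊕ Fin 2) ℂ) :=
  sp₄ ⊓ (blockTriangularLieSubalgebra ℂ flagIndex).map
    (lieConj flagBasis invertibleFlagBasis).toLieHom

instance isSolvable_flagStabilizer : LieAlgebra.IsSolvable flagStabilizer := by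
  have hT := isSolvable_blockTriangularLieSubalgebra (R := ℂ) flagIndex_injective
  have := (LieAlgebra.solvable_iff_equiv_solvable
    ((lieConj flagBasis invertibleFlagBasis).lieSubalgebraMap _)).mp hT
  exact (LieSubalgebra.inclusion_injective inf_le_right).lieAlgebra_isSolvable

theorem mem_flagStabilizer {Y : Matrix (Fin 2 ⊕ Fin 2) (Fin 2 ⊕ Fin 2) ℂ} (hY : Y ∈ sp₄)
    (hY' : (flagBasisInv * Y * flagBasis).BlockTriangular flagIndex) : Y ∈ flagStabilizer := by
  refine ⟨hY, _, ?_, (lieConj flagBasis invertibleFlagBasis).apply_symm_apply Y⟩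
  rwa [lieConj_symm_apply, inv_eq_right_inv flagBasis_mul_flagBasisInv]

def flagLift (B : Matrix (Fin 2) (Fin 2) ℂ) : Matrix (Fin 2 ⊕ Fin 2) (Fin 2 ⊕ Fin 2) ℂ :=
  fromBlocks !![B 1 0 - B 0 1, -B 0 0; -B 1 1, B 0 1 - B 1 0] B
    !![-B 1 1, B 0 1; B 1 0, -B 0 0] !![0, B 1 1; B 0 0, 0]

theorem flagLift_mem_sp₄ (B : Matrix (Fin 2) (Fin 2) ℂ) : flagLift B ∈ sp₄ := by
  refine (mem_skewAdjointMatricesSubmodule _ _).mpr ?_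
  change (flagLift B)ᵀ * J₄ = J₄ * -flagLift B
  ext (i | i) (j | j) <;> fin_cases i <;> fin_cases j <;>
    simp [flagLift, J₄, mul_apply, Fintype.sum_sum_type, Fin.sum_univ_two]

theorem blockTriangular_flagLift (B : Matrix (Fin 2) (Fin 2) ℂ) :
    (flagBasisInv * flagLift B * flagBasis).BlockTriangular flagIndex := by
  rintro (i | i) (j | j) hij <;> fin_cases i <;> fin_cases j <;>
    simp_all [flagIndex, flagBasis, flagBasisInv, flagLift, mul_apply, Fintype.sum_sum_type,
      Fin.sum_univ_two] <;> ring

theorem flagLift_mem_flagStabilizer (B : Matrix (Fin 2) (Fin 2) ℂ) :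
    flagLift B ∈ flagStabilizer :=
  mem_flagStabilizer (flagLift_mem_sp₄ B) (blockTriangular_flagLift B)

theorem mem_blockDiagLie_of_mem_sp₄ {X : Matrix (Fin 2 ⊕ Fin 2) (Fin 2 ⊕ Fin 2) ℂ}
    (hX : X ∈ sp₄) (h : X.toBlocks₁₂ = 0) : X ∈ blockDiagLie := by
  have hJ : Xᵀ * J₄ = J₄ * -X := (mem_skewAdjointMatricesSubmodule _ _).mp hX
  have h₁₂ (i j : Fin 2) : X (.inl i) (.inr j) = 0 := congrFun (congrFun h i) j
  refine ⟨h₁₂, fun i j => ?_⟩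
  -- this entry of `Xᵀ J₄ = -J₄ X` equates `± X (inr i) (inl j)` with an upper-right entry
  have hentry := congrFun (congrFun hJ (.inr (1 - i))) (.inl j)
  fin_cases i <;> fin_cases j <;>
    simpa [J₄, mul_apply, Fintype.sum_sum_type, Fin.sum_univ_two, h₁₂, eq_comm (a := (0 : ℂ))]
      using hentry

/-- The block-diagonal subalgebra `sp_2(ℂ) ⊕ sp_2(ℂ)` of `sp_4(ℂ)` is spherical in
`sp_4(ℂ)`: there is a solvable Lie subalgebra `b` of `sp_4(ℂ)` with `b + k = sp_4(ℂ)`. -/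
theorem stmt17 : IsSphericalIn (sp₄ ⊓ blockDiagLie) sp₄ := by
  refine ⟨flagStabilizer, inf_le_left, inferInstance, le_antisymm ?_ fun X hX => ?_⟩
  · exact sup_le inf_le_left inf_le_left
  · have hY := flagLift_mem_flagStabilizer X.toBlocks₁₂
    have hXY : X - flagLift X.toBlocks₁₂ ∈ sp₄ := sub_mem hX hY.1
    have hk : X - flagLift X.toBlocks₁₂ ∈ sp₄ ⊓ blockDiagLie :=
      ⟨hXY, mem_blockDiagLie_of_mem_sp₄ hXY (by ext i j; simp [flagLift, toBlocks₁₂])⟩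
    exact Submodule.mem_sup.mpr ⟨_, hY, _, hk, add_sub_cancel _ _⟩
end
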